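/- arXiv:2505.15053 — 4 statements merged into one kernel-verified Lean document; each statement's English description precedes it below -/
import Mathlib

section
/- Soundness of Owicki–Gries logic: if a Hoare triple {φ} s₀ ∥ ⋯ ∥ s_{N-1} {ψ} is derivable in Owicki–Gries logic (with the non-interference side condition on the parallel composition rule), then it is valid with respect to the standard interleaving state semantics: for any state M satisfying φ, every terminating execution of the parallel program from M ends in a state satisfying ψ. -/
abbrev Var := String
abbrev State := Var → ℤ

inductive Expr where
  | num : ℤ → Expr
  | var : Var → Expr
  | add : Expr → Expr → Expr
  | sub : Expr → Expr → Expr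

def Expr.eval (M : State) : Expr → ℤ
  | .num n => n
  | .var v => M v
  | .add a b => a.eval M + b.eval M
  | .sub a b => a.eval M - b.eval M

def upd (M : State) (v : Var) (n : ℤ) : State :=
  fun w => if w = v then n else M w

inductive Stmt where
  | skip : Stmt
  | assign : Var → Expr → Stmt
  | seq : Stmt → Stmt → Stmt

inductive Step : Stmt × State → Stmt × State → Prop where
  | assign {v E M} : Step (.assign v E, M) (.skip, upd M v (E.eval M))
  | seq1 {s₀ s₁ M M'} : Step (s₀, M) (.skip, M') → Step (.seq s₀ s₁, M) (s₁, M')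
  | seq2 {s₀ s₀' s₁ M M'} : Step (s₀, M) (s₀', M') → Step (.seq s₀ s₁, M) (.seq s₀' s₁, M')

abbrev PConf (N : ℕ) := (Fin N → Stmt) × State

inductive PStep {N : ℕ} : PConf N → PConf N → Prop where
  | mk {ss : Fin N → Stmt} {M : State} (i : Fin N) {s' : Stmt} {M' : State} :
      Step (ss i, M) (s', M') → PStep (ss, M) (Function.update ss i s', M')

inductive Assertion where
  | eq : Expr → Expr → Assertion
  | le : Expr → Expr → Assertion
  | not : Assertion → Assertion
  | and : Assertion → Assertion → Assertion

def Assertion.sat (M : State) : Assertion → Prop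
  | .eq a b => a.eval M = b.eval M
  | .le a b => a.eval M ≤ b.eval M
  | .not φ => ¬ φ.sat M
  | .and φ ψ => φ.sat M ∧ ψ.sat M

def Expr.subst : Expr → Var → Expr → Expr
  | .num n, _, _ => .num n
  | .var w, v, E => if w = v then E else .var w
  | .add a b, v, E => .add (a.subst v E) (b.subst v E)
  | .sub a b, v, E => .sub (a.subst v E) (b.subst v E)

def Assertion.subst : Assertion → Var → Expr → Assertion
  | .eq a b, v, E => .eq (a.subst v E) (b.subst v E)
  | .le a b, v, E => .le (a.subst v E) (b.subst v E)
  | .not φ, v, E => .not (φ.subst v E)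
  | .and φ ψ, v, E => .and (φ.subst v E) (ψ.subst v E)

/-- Owicki–Gries proof outlines for sequential programs. -/
inductive Proof : Assertion → Stmt → Assertion → Type where
  | assign {φ : Assertion} {v : Var} {E : Expr} :
      Proof (φ.subst v E) (.assign v E) φ
  | seq {φ ψ χ : Assertion} {s₀ s₁ : Stmt} :
      Proof φ s₀ ψ → Proof ψ s₁ χ → Proof φ (.seq s₀ s₁) χ
  | conseq {φ' φ ψ ψ' : Assertion} {s : Stmt} :
      (∀ M, φ'.sat M → φ.sat M) → Proof φ s ψ → (∀ M, ψ.sat M → ψ'.sat M) →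
      Proof φ' s ψ'

/-- All pre/post-conditions appearing in a proof outline. -/
def Proof.asserts {φ : Assertion} {s : Stmt} {ψ : Assertion} (p : Proof φ s ψ) :
    List Assertion :=
  φ :: ψ ::
    (match p with
      | .assign => []
      | .seq p q => p.asserts ++ q.asserts
      | .conseq _ p _ => p.asserts)

/-- All assignment instructions in a proof outline, together with their
preconditions. -/
def Proof.assigns : {φ : Assertion} → {s : Stmt} → {ψ : Assertion} →
    Proof φ s ψ → List (Assertion × Var × Expr)
  | _, .assign v E, ψ, .assign => [(ψ.subst v E, v, E)]
  | _, _, _, .seq p q => p.assigns ++ q.assigns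
  | _, _, _, .conseq _ p _ => p.assigns

/-- `NI D₁ D₀` : the derivation `D₁` does not interfere with `D₀`, i.e. every
assertion `χ` of `D₀` is stable under every assignment of `D₁` taken with its
precondition. -/
def NI {φ₀ s₀ ψ₀ φ₁ s₁ ψ₁ : _} (D₁ : Proof φ₁ s₁ ψ₁) (D₀ : Proof φ₀ s₀ ψ₀) : Prop :=
  ∀ χ ∈ D₀.asserts, ∀ a ∈ D₁.assigns,
    Nonempty (Proof (Assertion.and a.1 χ) (.assign a.2.1 a.2.2) χ)

def bigAnd : {n : ℕ} → (Fin n → Assertion) → Assertion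
  | 0, _ => .eq (.num 0) (.num 0)
  | _ + 1, f => .and (f 0) (bigAnd fun i => f i.succ)

/-- Owicki–Gries derivations for parallel programs: the parallel composition
rule with the non-interference side condition, closed under consequence. -/
inductive PProof : {N : ℕ} → Assertion → (Fin N → Stmt) → Assertion → Prop where
  | par {N : ℕ} {ss : Fin N → Stmt} (φs ψs : Fin N → Assertion)
      (Ds : ∀ i, Proof (φs i) (ss i) (ψs i))
      (hni : ∀ i j, i ≠ j → NI (Ds i) (Ds j)) :
      PProof (bigAnd φs) ss (bigAnd ψs)
  | conseq {N : ℕ} {ss : Fin N → Stmt} {φ' φ ψ ψ' : Assertion} :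
      (∀ M, φ'.sat M → φ.sat M) → PProof φ ss ψ → (∀ M, ψ.sat M → ψ'.sat M) →
      PProof φ' ss ψ'

/-! ### Auxiliary development for soundness -/

theorem Expr.subst_eval (e : Expr) (v : Var) (E : Expr) (M : State) :
    (e.subst v E).eval M = e.eval (upd M v (E.eval M)) := by
  induction e with
  | num n => rfl
  | var w =>
      simp only [Expr.subst, Expr.eval, upd]
      split <;> simp [Expr.eval]
  | add a b iha ihb => simp [Expr.subst, Expr.eval, iha, ihb]
  | sub a b iha ihb => simp [Expr.subst, Expr.eval, iha, ihb]

theorem Assertion.subst_sat (φ : Assertion) (v : Var) (E : Expr) (M : State) :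
    (φ.subst v E).sat M ↔ φ.sat (upd M v (E.eval M)) := by
  induction φ with
  | eq a b => simp [Assertion.subst, Assertion.sat, Expr.subst_eval]
  | le a b => simp [Assertion.subst, Assertion.sat, Expr.subst_eval]
  | not φ ih => simp [Assertion.subst, Assertion.sat, ih]
  | and φ ψ ih₁ ih₂ => simp [Assertion.subst, Assertion.sat, ih₁, ih₂]

theorem assign_sound' : ∀ {φ s ψ}, Proof φ s ψ → ∀ {v E}, s = .assign v E →
    ∀ M, φ.sat M → ψ.sat (upd M v (E.eval M)) := by
  intro φ s ψ p
  induction p with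
  | @assign φ v E =>
      intro v' E' h M hM
      cases h
      exact (Assertion.subst_sat _ _ _ M).mp hM
  | seq p q ih₁ ih₂ => intro v E h; cases h
  | conseq h₁ p h₂ ih =>
      intro v E h M hM
      exact h₂ _ (ih h M (h₁ M hM))

theorem assign_sound {φ v E ψ} (p : Proof φ (.assign v E) ψ) (M : State)
    (hM : φ.sat M) : ψ.sat (upd M v (E.eval M)) :=
  assign_sound' p rfl M hM

section OG

variable (A : List Assertion) (G : List (Assertion × Var × Expr))

/-- Residual proof outlines: statements possibly containing `skip`s, annotated
so that all live assertions lie in `A` and all assignments (with their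
preconditions) lie in `G`. -/
inductive OK : Assertion → Stmt → Assertion → Prop
  | skip {φ ψ} : (∀ M, φ.sat M → ψ.sat M) → φ ∈ A → OK φ .skip ψ
  | assign {φ ψ : Assertion} {v E} : (∀ M, φ.sat M → (ψ.subst v E).sat M) →
      φ ∈ A → ψ ∈ A → (ψ.subst v E, v, E) ∈ G → OK φ (.assign v E) ψ
  | seq {φ ψ χ s₀ s₁} : OK φ s₀ ψ → OK ψ s₁ χ → OK φ (.seq s₀ s₁) χ
  | conseq {φ' φ ψ ψ' s} : (∀ M, φ'.sat M → φ.sat M) → φ' ∈ A →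
      OK φ s ψ → (∀ M, ψ.sat M → ψ'.sat M) → OK φ' s ψ'

theorem ok_pre_mem : ∀ {φ s ψ}, OK A G φ s ψ → φ ∈ A := by
  intro φ s ψ h
  induction h with
  | skip _ hA => exact hA
  | assign _ hA _ _ => exact hA
  | seq _ _ ih₁ _ => exact ih₁
  | conseq _ hA _ _ _ => exact hA

theorem ok_skip_implies' : ∀ {φ s ψ}, OK A G φ s ψ → s = .skip →
    ∀ M, φ.sat M → ψ.sat M := by
  intro φ s ψ h
  induction h with
  | skip himp _ => intro _ M hM; exact himp M hM
  | assign => intro h; cases h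
  | seq _ _ _ _ => intro h; cases h
  | conseq h₁ _ _ h₂ ih => intro h M hM; exact h₂ _ (ih h M (h₁ M hM))

theorem ok_skip_implies {φ ψ} (h : OK A G φ .skip ψ) :
    ∀ M, φ.sat M → ψ.sat M :=
  ok_skip_implies' A G h rfl

theorem proof_ok : ∀ {φ s ψ} (p : Proof φ s ψ),
    (∀ χ ∈ p.asserts, χ ∈ A) → (∀ a ∈ p.assigns, a ∈ G) → OK A G φ s ψ := by
  intro φ s ψ p
  induction p with
  | @assign φ v E =>
      intro hA hG
      refine OK.assign (fun M hM => hM) ?_ ?_ ?_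
      · exact hA _ (by simp [Proof.asserts])
      · exact hA _ (by simp [Proof.asserts])
      · exact hG _ (by simp [Proof.assigns])
  | @seq φ ψ χ s₀ s₁ p q ih₁ ih₂ =>
      intro hA hG
      refine OK.seq (ih₁ ?_ ?_) (ih₂ ?_ ?_)
      · intro a ha; exact hA a (by simp [Proof.asserts]; tauto)
      · intro a ha; exact hG a (by simp [Proof.assigns]; tauto)
      · intro a ha; exact hA a (by simp [Proof.asserts]; tauto)
      · intro a ha; exact hG a (by simp [Proof.assigns]; tauto)
  | @conseq φ' φ ψ ψ' s h₁ p h₂ ih =>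
      intro hA hG
      refine OK.conseq h₁ (hA _ (by simp [Proof.asserts])) (ih ?_ ?_) h₂
      · intro a ha; exact hA a (by simp [Proof.asserts]; tauto)
      · intro a ha; exact hG a (by simp [Proof.assigns]; tauto)

theorem ok_step : ∀ {φ s ψ}, OK A G φ s ψ → ∀ {s' M M'},
    Step (s, M) (s', M') → φ.sat M →
    ∃ v E χ, M' = upd M v (E.eval M) ∧ (χ, v, E) ∈ G ∧ χ.sat M ∧
      ∃ φ', OK A G φ' s' ψ ∧ φ'.sat M' := by
  intro φ s ψ h
  induction h with
  | skip _ _ => intro s' M M' hst; cases hst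
  | @assign φ ψ v E himp hA hB hG =>
      intro s' M M' hst hM
      cases hst with
      | assign =>
          refine ⟨v, E, ψ.subst v E, rfl, hG, himp M hM, ψ, OK.skip (fun _ => id) hB, ?_⟩
          exact (Assertion.subst_sat ψ v E M).mp (himp M hM)
  | @seq φ ψ χ s₀ s₁ h₁ h₂ ih₁ _ =>
      intro s' M M' hst hM
      cases hst with
      | seq1 hst' =>
          obtain ⟨v, E, χ', hM', hG, hχ, φ'', hok, hsat⟩ := ih₁ hst' hM
          exact ⟨v, E, χ', hM', hG, hχ, ψ, h₂, ok_skip_implies A G hok M' hsat⟩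
      | seq2 hst' =>
          obtain ⟨v, E, χ', hM', hG, hχ, φ'', hok, hsat⟩ := ih₁ hst' hM
          exact ⟨v, E, χ', hM', hG, hχ, φ'', OK.seq hok h₂, hsat⟩
  | @conseq φ' φ ψ ψ' s h₁ hA hok h₂ ih =>
      intro s' M M' hst hM
      obtain ⟨v, E, χ', hM', hG, hχ, φ'', hok', hsat⟩ := ih hst (h₁ M hM)
      exact ⟨v, E, χ', hM', hG, hχ, φ'',
        OK.conseq (fun _ => id) (ok_pre_mem A G hok') hok' h₂, hsat⟩

end OG

theorem bigAnd_sat : ∀ {n} (f : Fin n → Assertion) (M : State),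
    (bigAnd f).sat M ↔ ∀ i, (f i).sat M := by
  intro n
  induction n with
  | zero =>
      intro f M
      simp [bigAnd, Assertion.sat, Expr.eval]
  | succ n ih =>
      intro f M
      simp [bigAnd, Assertion.sat, ih, Fin.forall_fin_succ]

/-- soundness of Owicki–Gries logic with respect to the standard
interleaving state semantics. -/
theorem owicki_gries_sound {N : ℕ} {ss : Fin N → Stmt} {φ ψ : Assertion}
    (h : PProof φ ss ψ) :
    ∀ M M' : State, φ.sat M →
      Relation.ReflTransGen PStep ((ss, M) : PConf N) ((fun _ => Stmt.skip), M') →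
      ψ.sat M' := by
  induction h with
  | @par ss φs ψs Ds hni =>
      intro M M' hφ hrt
      -- the invariant
      set Inv : PConf N → Prop := fun c =>
        ∃ φ's : Fin N → Assertion, ∀ i,
          OK (Ds i).asserts (Ds i).assigns (φ's i) (c.1 i) (ψs i) ∧
            (φ's i).sat c.2 with hInv
      have init : Inv (ss, M) := by
        refine ⟨φs, fun i => ⟨proof_ok _ _ (Ds i) (fun _ h => h) (fun _ h => h), ?_⟩⟩
        exact (bigAnd_sat φs M).mp hφ i
      have pres : ∀ c c', PStep c c' → Inv c → Inv c' := by
        rintro c c' hstep ⟨φ's, hok⟩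
        cases hstep with
        | @mk ts Mc i s' M' hst =>
            obtain ⟨v, E, χ', hM', hG, hχ, φ'i, hoki, hsati⟩ :=
              ok_step _ _ (hok i).1 hst (hok i).2
            refine ⟨Function.update φ's i φ'i, fun j => ?_⟩
            by_cases hji : j = i
            · subst hji
              simpa using ⟨hoki, hsati⟩
            · have hne : φ's j ∈ (Ds j).asserts := ok_pre_mem _ _ (hok j).1
              have hNI := hni i j (fun h => hji h.symm) (φ's j) hne (χ', v, E) hG
              obtain ⟨q⟩ := hNI
              have : (φ's j).sat M' := by
                subst hM'
                exact assign_sound q Mc ⟨hχ, (hok j).2⟩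
              simp only [Function.update_of_ne hji]
              exact ⟨(hok j).1, this⟩
      have key : ∀ {c c'}, Relation.ReflTransGen PStep c c' → Inv c → Inv c' := by
        intro c c' h
        induction h with
        | refl => exact id
        | tail _ hstep ih => exact fun hc => pres _ _ hstep (ih hc)
      obtain ⟨φ's, hok⟩ := key hrt init
      refine (bigAnd_sat ψs M').mpr fun i => ?_
      exact ok_skip_implies _ _ (hok i).1 M' (hok i).2
  | conseq h₁ p h₂ ih =>
      intro M M' hφ hrt
      exact h₂ _ (ih M M' (h₁ M hφ) hrt)
end

section
/- In timestamp semantics with a single thread, if the memory initially contains for each shared variable x exactly the messages written by this thread plus one initial message at timestamp 0, then a load r := x always reads the value of the most recent store to x by that thread (or the initial value if the thread has not stored to x); consequently the assignment axiom {[x/r]φ} r := x {φ}, reading x as the unique latest value, is sound for single-threaded programs. -/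
abbrev SVar := String
abbrev LVar := String
abbrev Time := ℚ
abbrev LState := LVar → ℤ
abbrev Clock := SVar → Time
abbrev Mem := SVar × Time → Option ℤ

inductive TExpr where
  | num : ℤ → TExpr
  | lvar : LVar → TExpr
  | add : TExpr → TExpr → TExpr

def TExpr.eval (S : LState) : TExpr → ℤ
  | .num n => n
  | .lvar r => S r
  | .add a b => a.eval S + b.eval S

inductive TStmt where
  | skip : TStmt
  | asgn : LVar → TExpr → TStmt
  | load : LVar → SVar → TStmt
  | store : SVar → TExpr → TStmt
  | seq : TStmt → TStmt → TStmt

def updL (S : LState) (r : LVar) (n : ℤ) : LState := fun r' => if r' = r then n else S r'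
def updC (T : Clock) (x : SVar) (t : Time) : Clock := fun y => if y = x then t else T y
def updM (M : Mem) (x : SVar) (t : Time) (n : ℤ) : Mem :=
  fun p => if p = (x, t) then some n else M p

structure TConf where
  stmt : TStmt
  st : LState
  clk : Clock

inductive TStep : TConf × Mem → TConf × Mem → Prop where
  | asgn {r e S T M} :
      TStep (⟨.asgn r e, S, T⟩, M) (⟨.skip, updL S r (e.eval S), T⟩, M)
  | load {r x t n S T M} : M (x, t) = some n → T x ≤ t →
      TStep (⟨.load r x, S, T⟩, M) (⟨.skip, updL S r n, updC T x t⟩, M)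
  | store {x e t S T M} : T x < t → M (x, t) = none →
      TStep (⟨.store x e, S, T⟩, M) (⟨.skip, S, updC T x t⟩, updM M x t (e.eval S))
  | seq1 {s₀ s₁ S T M S' T' M'} :
      TStep (⟨s₀, S, T⟩, M) (⟨.skip, S', T'⟩, M') →
      TStep (⟨.seq s₀ s₁, S, T⟩, M) (⟨s₁, S', T'⟩, M')
  | seq2 {s₀ s₀' s₁ S T M S' T' M'} :
      TStep (⟨s₀, S, T⟩, M) (⟨s₀', S', T'⟩, M') →
      TStep (⟨.seq s₀ s₁, S, T⟩, M) (⟨.seq s₀' s₁, S', T'⟩, M')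

abbrev GConf (N : ℕ) := (Fin N → TConf) × Mem

inductive GStep {N : ℕ} : GConf N → GConf N → Prop where
  | mk {𝔠 : Fin N → TConf} {M : Mem} (i : Fin N) {C' : TConf} {M' : Mem} :
      TStep (𝔠 i, M) (C', M') → GStep (𝔠, M) (Function.update 𝔠 i C', M')

/-- Assertion expressions: numerals, thread-local variables, and the shared
variable `x` read as the unique latest value `M(x, T(x))`. -/
inductive AExpr where
  | num : ℤ → AExpr
  | lvar : LVar → AExpr
  | svar : SVar → AExpr
  | add : AExpr → AExpr → AExpr

def AExpr.eval (S : LState) (T : Clock) (M : Mem) : AExpr → ℤ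
  | .num n => n
  | .lvar r => S r
  | .svar x => (M (x, T x)).getD 0
  | .add a b => a.eval S T M + b.eval S T M

/-- `[x/r]` on expressions. -/
def AExpr.substR : AExpr → LVar → SVar → AExpr
  | .num n, _, _ => .num n
  | .lvar r', r, x => if r' = r then .svar x else .lvar r'
  | .svar y, _, _ => .svar y
  | .add a b, r, x => .add (a.substR r x) (b.substR r x)

inductive TAssert where
  | eq : AExpr → AExpr → TAssert
  | le : AExpr → AExpr → TAssert
  | not : TAssert → TAssert
  | and : TAssert → TAssert → TAssert

def TAssert.sat (S : LState) (T : Clock) (M : Mem) : TAssert → Prop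
  | .eq a b => a.eval S T M = b.eval S T M
  | .le a b => a.eval S T M ≤ b.eval S T M
  | .not φ => ¬ φ.sat S T M
  | .and φ ψ => φ.sat S T M ∧ ψ.sat S T M

/-- `[x/r]φ`. -/
def TAssert.substR : TAssert → LVar → SVar → TAssert
  | .eq a b, r, x => .eq (a.substR r x) (b.substR r x)
  | .le a b, r, x => .le (a.substR r x) (b.substR r x)
  | .not φ, r, x => .not (φ.substR r x)
  | .and φ ψ, r, x => .and (φ.substR r x) (ψ.substR r x)

/-- The single-thread initial configuration: memory has exactly one initial
message per shared variable, at timestamp `0`, and the clock is all `0`. -/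
def initMem (n₀ : SVar → ℤ) : Mem := fun p => if p.2 = 0 then some (n₀ p.1) else none

def MemInv (T : Clock) (M : Mem) : Prop :=
  (∀ x t n, M (x, t) = some n → t ≤ T x) ∧ (∀ x, M (x, T x) ≠ none)

lemma meminv_step {c c' : TConf × Mem} (h : TStep c c') (hI : MemInv c.1.clk c.2) :
    MemInv c'.1.clk c'.2 := by
  induction h with
  | asgn => exact hI
  | @load r x t n S T M hM hle =>
      obtain ⟨h1, h2⟩ := hI
      constructor
      · intro y t' n' hy
        simp only [updC]
        split
        · next hyx => subst hyx; exact le_trans (h1 y t' n' hy) hle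
        · exact h1 y t' n' hy
      · intro y
        simp only [updC]
        split
        · next hyx => subst hyx; simp [hM]
        · exact h2 y
  | @store x e t S T M hlt hM =>
      obtain ⟨h1, h2⟩ := hI
      constructor
      · intro y t' n' hy
        simp only [updM] at hy
        simp only [updC]
        split at hy
        · next hp =>
            obtain ⟨hy1, hy2⟩ := Prod.mk.injEq .. ▸ hp
            subst hy1; subst hy2; simp
        · next hp =>
            split
            · next hyx => subst hyx; exact le_of_lt (lt_of_le_of_lt (h1 y t' n' hy) hlt)
            · exact h1 y t' n' hy
      · intro y
        simp only [updM, updC]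
        split
        · next hyx => subst hyx; simp
        · next hyx =>
            have : (y, T y) ≠ (x, t) := by simp [hyx]
            simp [this]
            exact h2 y
  | seq1 _ ih => exact ih hI
  | seq2 _ ih => exact ih hI

lemma meminv_reach {c c' : TConf × Mem} (h : Relation.ReflTransGen TStep c c')
    (hI : MemInv c.1.clk c.2) : MemInv c'.1.clk c'.2 := by
  induction h with
  | refl => exact hI
  | tail _ hs ih => exact meminv_step hs ih

lemma eval_subst (S : LState) (T : Clock) (M : Mem) (r : LVar) (x : SVar) (a : AExpr) :
    (a.substR r x).eval S T M = a.eval (updL S r ((M (x, T x)).getD 0)) T M := by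
  induction a with
  | num n => rfl
  | lvar r' =>
      simp only [AExpr.substR]
      split
      · next h => subst h; simp [AExpr.eval, updL]
      · next h => simp [AExpr.eval, updL, h]
  | svar y => rfl
  | add a b iha ihb => simp [AExpr.substR, AExpr.eval, iha, ihb]

lemma sat_subst (S : LState) (T : Clock) (M : Mem) (r : LVar) (x : SVar) (φ : TAssert) :
    (φ.substR r x).sat S T M ↔ φ.sat (updL S r ((M (x, T x)).getD 0)) T M := by
  induction φ with
  | eq a b => simp [TAssert.substR, TAssert.sat, eval_subst]
  | le a b => simp [TAssert.substR, TAssert.sat, eval_subst]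
  | not φ ih => simp [TAssert.substR, TAssert.sat, ih]
  | and φ ψ ihφ ihψ => simp [TAssert.substR, TAssert.sat, ihφ, ihψ]

/-- with a single thread, every message in a reachable memory has
timestamp at most the thread's clock, so a load `r := x` always reads the most
recent store to `x` (or the initial value); consequently the assignment axiom
`{[x/r]φ} r := x {φ}` is sound for single-threaded programs. -/
theorem single_thread_load_determined (n₀ : SVar → ℤ) (s₀ : TStmt) (S₀ : LState)
    (c : TConf × Mem)
    (h : Relation.ReflTransGen TStep (⟨⟨s₀, S₀, fun _ => 0⟩, initMem n₀⟩) c) :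
    (∀ x t n, c.2 (x, t) = some n → t ≤ c.1.clk x) ∧
    (∀ x, c.2 (x, c.1.clk x) ≠ none) ∧
    (∀ (r : LVar) (x : SVar) (φ : TAssert) (c' : TConf × Mem),
      c.1.stmt = .load r x →
      TAssert.sat c.1.st c.1.clk c.2 (φ.substR r x) →
      TStep c c' →
      TAssert.sat c'.1.st c'.1.clk c'.2 φ) := by
  have hinit : MemInv (fun _ => (0 : Time)) (initMem n₀) := by
    constructor
    · intro x t n hm
      simp only [initMem] at hm
      split at hm
      · next h => exact le_of_eq h
      · exact absurd hm (by simp)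
    · intro x; simp [initMem]
  have hI : MemInv c.1.clk c.2 := meminv_reach h hinit
  obtain ⟨h1, h2⟩ := hI
  refine ⟨h1, h2, ?_⟩
  intro r x φ c' hstmt hsat hstep
  obtain ⟨⟨s, S, T⟩, M⟩ := c
  simp only at hstmt
  subst hstmt
  obtain ⟨C', M'⟩ := c'
  cases hstep with
  | @load _ _ t n _ _ _ hM hle =>
      have ht : t = T x := le_antisymm (h1 x t n hM) hle
      subst ht
      have hT : updC T x (T x) = T := by
        funext y; simp only [updC]; split
        · next hy => rw [hy]
        · rfl
      simp only [hT]
      have := (sat_subst S T M r x φ).mp hsat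
      simpa [hM] using this
end

section
/- The parallel-composition confluence property of non-interference: suppose {φ₀} c₀ {ψ₀} and {ψ₀} c₀' {χ₀} are valid triples for thread 0, {φ₁} c₁ {ψ₁} and {ψ₁} c₁' {χ₁} for thread 1 (each cᵢ an atomic assignment), and each thread's assertions (φᵢ, ψᵢ, χᵢ) are stable under every assignment of the other thread (i.e., {φ₁∧θ} c {θ} is valid for each assertion θ of thread 0 and assignment c with precondition φ₁ of thread 1, and symmetrically). Then for every interleaving of c₀;c₀' with c₁;c₁', starting from a state satisfying φ₀ ∧ φ₁, the final state satisfies χ₀ ∧ χ₁. -/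
/-- Semantic assertions. -/
abbrev Assn := State → Prop

/-- An atomic assignment `v := E`. -/
structure Asgn where
  v : Var
  E : State → ℤ

/-- Executing an atomic assignment. -/
def exec (M : State) (c : Asgn) : State := fun w => if w = c.v then c.E M else M w

def execList (M : State) : List Asgn → State
  | [] => M
  | c :: l => execList (exec M c) l

/-- Validity of a Hoare triple for an atomic assignment. -/
def valid (φ : Assn) (c : Asgn) (ψ : Assn) : Prop := ∀ M, φ M → ψ (exec M c)

/-- The six interleavings of `c₀; c₀'` with `c₁; c₁'`. -/
def interleavings (c₀ c₀' c₁ c₁' : Asgn) : List (List Asgn) :=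
  [[c₀, c₀', c₁, c₁'], [c₀, c₁, c₀', c₁'], [c₀, c₁, c₁', c₀'],
   [c₁, c₀, c₀', c₁'], [c₁, c₀, c₁', c₀'], [c₁, c₁', c₀, c₀']]

/-- the parallel-composition confluence property of
non-interference: if the two sequential threads have valid proof outlines and
each thread's assertions are stable under the other thread's assignments
(taken with their preconditions), then every interleaving started from
`φ₀ ∧ φ₁` ends in `χ₀ ∧ χ₁`. -/
theorem noninterference_confluence
    (φ₀ ψ₀ χ₀ φ₁ ψ₁ χ₁ : Assn) (c₀ c₀' c₁ c₁' : Asgn)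
    (h₀ : valid φ₀ c₀ ψ₀) (h₀' : valid ψ₀ c₀' χ₀)
    (h₁ : valid φ₁ c₁ ψ₁) (h₁' : valid ψ₁ c₁' χ₁)
    (hstab₀ : ∀ θ : Assn, (θ = φ₀ ∨ θ = ψ₀ ∨ θ = χ₀) →
      valid (fun M => φ₁ M ∧ θ M) c₁ θ ∧ valid (fun M => ψ₁ M ∧ θ M) c₁' θ)
    (hstab₁ : ∀ θ : Assn, (θ = φ₁ ∨ θ = ψ₁ ∨ θ = χ₁) →
      valid (fun M => φ₀ M ∧ θ M) c₀ θ ∧ valid (fun M => ψ₀ M ∧ θ M) c₀' θ) :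
    ∀ l ∈ interleavings c₀ c₀' c₁ c₁', ∀ M : State,
      φ₀ M ∧ φ₁ M → χ₀ (execList M l) ∧ χ₁ (execList M l) := by

  obtain ⟨s00, s00'⟩ := hstab₀ φ₀ (Or.inl rfl)
  obtain ⟨s01, s01'⟩ := hstab₀ ψ₀ (Or.inr (Or.inl rfl))
  obtain ⟨s02, s02'⟩ := hstab₀ χ₀ (Or.inr (Or.inr rfl))
  obtain ⟨s10, s10'⟩ := hstab₁ φ₁ (Or.inl rfl)
  obtain ⟨s11, s11'⟩ := hstab₁ ψ₁ (Or.inr (Or.inl rfl))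
  obtain ⟨s12, s12'⟩ := hstab₁ χ₁ (Or.inr (Or.inr rfl))
  intro l hl M hM
  obtain ⟨hφ₀, hφ₁⟩ := hM
  simp only [interleavings, List.mem_cons, List.not_mem_nil, or_false] at hl
  rcases hl with rfl|rfl|rfl|rfl|rfl|rfl <;> simp only [execList]
  · have a1 := h₀ M hφ₀; have b1 := s10 M ⟨hφ₀, hφ₁⟩
    have a2 := h₀' _ a1; have b2 := s10' _ ⟨a1, b1⟩
    have a3 := s02 _ ⟨b2, a2⟩; have b3 := h₁ _ b2
    exact ⟨s02' _ ⟨b3, a3⟩, h₁' _ b3⟩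
  · have a1 := h₀ M hφ₀; have b1 := s10 M ⟨hφ₀, hφ₁⟩
    have a2 := s01 _ ⟨b1, a1⟩; have b2 := h₁ _ b1
    have a3 := h₀' _ a2; have b3 := s11' _ ⟨a2, b2⟩
    exact ⟨s02' _ ⟨b3, a3⟩, h₁' _ b3⟩
  · have a1 := h₀ M hφ₀; have b1 := s10 M ⟨hφ₀, hφ₁⟩
    have a2 := s01 _ ⟨b1, a1⟩; have b2 := h₁ _ b1
    have a3 := s01' _ ⟨b2, a2⟩; have b3 := h₁' _ b2
    exact ⟨h₀' _ a3, s12' _ ⟨a3, b3⟩⟩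
  · have a1 := s00 M ⟨hφ₁, hφ₀⟩; have b1 := h₁ M hφ₁
    have a2 := h₀ _ a1; have b2 := s11 _ ⟨a1, b1⟩
    have a3 := h₀' _ a2; have b3 := s11' _ ⟨a2, b2⟩
    exact ⟨s02' _ ⟨b3, a3⟩, h₁' _ b3⟩
  · have a1 := s00 M ⟨hφ₁, hφ₀⟩; have b1 := h₁ M hφ₁
    have a2 := h₀ _ a1; have b2 := s11 _ ⟨a1, b1⟩
    have a3 := s01' _ ⟨b2, a2⟩; have b3 := h₁' _ b2
    exact ⟨h₀' _ a3, s12' _ ⟨a3, b3⟩⟩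
  · have a1 := s00 M ⟨hφ₁, hφ₀⟩; have b1 := h₁ M hφ₁
    have a2 := s00' _ ⟨b1, a1⟩; have b2 := h₁' _ b1
    have a3 := h₀ _ a2; have b3 := s12 _ ⟨a2, b2⟩
    exact ⟨h₀' _ a3, s12' _ ⟨a3, b3⟩⟩
end

section
/- Validity of the thread-local assignment axiom in timestamp semantics: if a global configuration satisfies [e/r]φ and thread i executes r := e (where e contains only numerals and thread-i local variables), the resulting configuration satisfies φ; moreover the memory, all vector clocks, and all other threads' local states are unchanged. -/
abbrev TVar := String
/-- Expressions over numerals, per-thread local variables, observation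
variables `xⁱ`, and timestamp variables (interpreted by a fixed valuation). -/
inductive OExpr (N : ℕ) where
  | num : ℤ → OExpr N
  | lvar : Fin N → LVar → OExpr N
  | obs : SVar → Fin N → OExpr N
  | tvar : TVar → OExpr N
  | add : OExpr N → OExpr N → OExpr N

def OExpr.eval {N : ℕ} (ρ : TVar → ℤ) (𝔖 : Fin N → LState) (𝔗 : Fin N → Clock)
    (M : Mem) : OExpr N → ℤ
  | .num n => n
  | .lvar i r => 𝔖 i r
  | .obs x i => (M (x, 𝔗 i x)).getD 0
  | .tvar v => ρ v
  | .add a b => a.eval ρ 𝔖 𝔗 M + b.eval ρ 𝔖 𝔗 M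

/-- `e` contains only numerals and thread-`i` local variables. -/
def OExpr.localTo {N : ℕ} (i : Fin N) : OExpr N → Prop
  | .num _ => True
  | .lvar j _ => j = i
  | .obs _ _ => False
  | .tvar _ => False
  | .add a b => a.localTo i ∧ b.localTo i

/-- Substitution `[e/r]` (for thread `i`'s local variable `r`) on expressions. -/
def OExpr.substL {N : ℕ} : OExpr N → Fin N → LVar → OExpr N → OExpr N
  | .num n, _, _, _ => .num n
  | .lvar j r', i, r, e => if j = i ∧ r' = r then e else .lvar j r'
  | .obs x j, _, _, _ => .obs x j
  | .tvar v, _, _, _ => .tvar v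
  | .add a b, i, r, e => .add (a.substL i r e) (b.substL i r e)

inductive OAssert (N : ℕ) where
  | eq : OExpr N → OExpr N → OAssert N
  | le : OExpr N → OExpr N → OAssert N
  | not : OAssert N → OAssert N
  | and : OAssert N → OAssert N → OAssert N

def OAssert.sat {N : ℕ} (ρ : TVar → ℤ) (𝔖 : Fin N → LState) (𝔗 : Fin N → Clock)
    (M : Mem) : OAssert N → Prop
  | .eq a b => a.eval ρ 𝔖 𝔗 M = b.eval ρ 𝔖 𝔗 M
  | .le a b => a.eval ρ 𝔖 𝔗 M ≤ b.eval ρ 𝔖 𝔗 M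
  | .not φ => ¬ φ.sat ρ 𝔖 𝔗 M
  | .and φ ψ => φ.sat ρ 𝔖 𝔗 M ∧ ψ.sat ρ 𝔖 𝔗 M

/-- Substitution `[e/r]` on assertions. -/
def OAssert.substL {N : ℕ} : OAssert N → Fin N → LVar → OExpr N → OAssert N
  | .eq a b, i, r, e => .eq (a.substL i r e) (b.substL i r e)
  | .le a b, i, r, e => .le (a.substL i r e) (b.substL i r e)
  | .not φ, i, r, e => .not (φ.substL i r e)
  | .and φ ψ, i, r, e => .and (φ.substL i r e) (ψ.substL i r e)


lemma eval_substL {N : ℕ} (i : Fin N) (r : LVar) (e : OExpr N) (ρ : TVar → ℤ)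
    (𝔖 : Fin N → LState) (𝔗 : Fin N → Clock) (M : Mem) (a : OExpr N) :
    (a.substL i r e).eval ρ 𝔖 𝔗 M =
      a.eval ρ (Function.update 𝔖 i (updL (𝔖 i) r (e.eval ρ 𝔖 𝔗 M))) 𝔗 M := by
  induction a with
  | num n => rfl
  | lvar j r' =>
    simp only [OExpr.substL, OExpr.eval]
    by_cases h : j = i ∧ r' = r
    · obtain ⟨h1, h2⟩ := h
      subst h1; subst h2
      simp [OExpr.eval, Function.update_self, updL]
    · rw [if_neg h, OExpr.eval]
      by_cases hj : j = i
      · subst hj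
        have hr : r' ≠ r := fun hr => h ⟨rfl, hr⟩
        simp [Function.update_self, updL, hr]
      · simp [Function.update_of_ne hj]
  | obs x j => rfl
  | tvar v => rfl
  | add a b iha ihb => simp [OExpr.substL, OExpr.eval, iha, ihb]

lemma sat_substL {N : ℕ} (i : Fin N) (r : LVar) (e : OExpr N) (ρ : TVar → ℤ)
    (𝔖 : Fin N → LState) (𝔗 : Fin N → Clock) (M : Mem) (φ : OAssert N) :
    OAssert.sat ρ 𝔖 𝔗 M (φ.substL i r e) ↔
      OAssert.sat ρ (Function.update 𝔖 i (updL (𝔖 i) r (e.eval ρ 𝔖 𝔗 M))) 𝔗 M φ := by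
  induction φ with
  | eq a b => simp [OAssert.substL, OAssert.sat, eval_substL]
  | le a b => simp [OAssert.substL, OAssert.sat, eval_substL]
  | not φ ih => simp [OAssert.substL, OAssert.sat, ih]
  | and φ ψ ih1 ih2 => simp [OAssert.substL, OAssert.sat, ih1, ih2]

/-- validity of the thread-local assignment axiom in timestamp
semantics: if a configuration satisfies `[e/r]φ` and thread `i` executes
`r := e` (with `e` containing only numerals and thread-`i` local variables),
then the resulting configuration — whose memory and vector clocks are exactly
those of the original, and in which only thread `i`'s local state changed —
satisfies `φ`. -/
theorem local_assign_axiom_valid {N : ℕ} (i : Fin N) (r : LVar) (e : OExpr N)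
    (he : e.localTo i) (φ : OAssert N) (ρ : TVar → ℤ)
    (𝔖 : Fin N → LState) (𝔗 : Fin N → Clock) (M : Mem)
    (hpre : OAssert.sat ρ 𝔖 𝔗 M (φ.substL i r e)) :
    OAssert.sat ρ (Function.update 𝔖 i (updL (𝔖 i) r (e.eval ρ 𝔖 𝔗 M))) 𝔗 M φ ∧
    (∀ j, j ≠ i → Function.update 𝔖 i (updL (𝔖 i) r (e.eval ρ 𝔖 𝔗 M)) j = 𝔖 j) := by
  exact ⟨(sat_substL i r e ρ 𝔖 𝔗 M φ).mp hpre, fun j hj => Function.update_of_ne hj _ _⟩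
end
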